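/- arXiv:2504.09392 — 8 statements merged into one kernel-verified Lean document; each statement's English description precedes it below -/
import Mathlib

section
/- In any convex space (a set with binary operations +_p for p in (0,1) satisfying idempotence x +_p x = x, skew-commutativity x +_p y = y +_{1-p} x, and skew-associativity, i.e. the standard barycentric axioms), the cancellation property 'x +_{1/2} z = y +_{1/2} z implies x = y' holds if and only if for every p in (0,1), 'x +_p z = y +_p z implies x = y'. -/
/-- A convex (barycentric) space: a set with binary operations `+_p` for
`p ∈ (0,1)` satisfying idempotence, skew-commutativity and
skew-associativity.  The operation `comb p x y` is only constrained (hence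
only meaningful) for `0 < p < 1`. -/
structure ConvexSpace (X : Type) where
  comb : ℝ → X → X → X
  idem : ∀ (p : ℝ) (x : X), 0 < p → p < 1 → comb p x x = x
  comm : ∀ (p : ℝ) (x y : X), 0 < p → p < 1 → comb p x y = comb (1 - p) y x
  assoc : ∀ (p q : ℝ) (x y z : X), 0 < p → p < 1 → 0 < q → q < 1 →
    comb q (comb p x y) z = comb (p * q) x (comb (q * (1 - p) / (1 - p * q)) y z)

/-- Key identity: combining `comb p x z` with `z` at parameter `q` gives
`comb (p*q) x z`. -/
lemma ConvexSpace.key {X : Type} (C : ConvexSpace X) (p q : ℝ)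
    (hp0 : 0 < p) (hp1 : p < 1) (hq0 : 0 < q) (hq1 : q < 1) (x z : X) :
    C.comb q (C.comb p x z) z = C.comb (p * q) x z := by
  have hpq : p * q < 1 := by nlinarith
  rw [C.assoc p q x z z hp0 hp1 hq0 hq1,
    C.idem (q * (1 - p) / (1 - p * q)) z
      (by apply div_pos (by nlinarith) (by linarith))
      (by rw [div_lt_one (by linarith)]; nlinarith)]

/-- In a convex space, cancellativity of `+_{1/2}` is equivalent to
cancellativity of `+_p` for every `p ∈ (0,1)`. -/
theorem stmt_0 {X : Type} (C : ConvexSpace X) :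
    (∀ x y z : X, C.comb (1 / 2) x z = C.comb (1 / 2) y z → x = y) ↔
      (∀ p : ℝ, 0 < p → p < 1 →
        ∀ x y z : X, C.comb p x z = C.comb p y z → x = y) := by
  constructor
  · intro h
    -- cancellation for r ≥ 1/2
    have base : ∀ r : ℝ, 1 / 2 ≤ r → r < 1 →
        ∀ x y z : X, C.comb r x z = C.comb r y z → x = y := by
      intro r hr hr1 x y z heq
      rcases eq_or_lt_of_le hr with heq2 | hlt
      · exact h x y z (heq2 ▸ heq)
      · have hr0 : 0 < r := by linarith
        set q : ℝ := 1 / (2 * r) with hq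
        have hq0 : 0 < q := by positivity
        have hq1 : q < 1 := by
          rw [hq, div_lt_one (by linarith)]; linarith
        have hrq : r * q = 1 / 2 := by
          field_simp [hq]; rw [hq]; field_simp
        have e1 : C.comb (1/2) x z = C.comb (1/2) y z := by
          rw [← hrq, ← C.key r q hr0 hr1 hq0 hq1 x z,
            ← C.key r q hr0 hr1 hq0 hq1 y z, heq]
        exact h x y z e1
    -- downward induction: cancellation whenever (1/2)^n ≤ r
    have ind : ∀ n : ℕ, ∀ r : ℝ, 0 < r → r < 1 → (1/2 : ℝ) ^ n ≤ r →
        ∀ x y z : X, C.comb r x z = C.comb r y z → x = y := by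
      intro n
      induction n with
      | zero => intro r hr0 hr1 hle; simp at hle; intro x y z _; linarith
      | succ n ih =>
        intro r hr0 hr1 hle x y z heq
        rcases le_or_gt (1/2 : ℝ) r with hge | hlt
        · exact base r hge hr1 x y z heq
        · have h2r0 : 0 < 2 * r := by linarith
          have h2r1 : 2 * r < 1 := by linarith
          have h2rle : (1/2 : ℝ) ^ n ≤ 2 * r := by
            have : (1/2 : ℝ) ^ (n+1) ≤ r := hle
            rw [pow_succ] at this; linarith
          have hr2 : (2 * r) * (1/2 : ℝ) = r := by ring
          have k1 := C.key (2*r) (1/2) h2r0 h2r1 (by norm_num) (by norm_num) x z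
          have k2 := C.key (2*r) (1/2) h2r0 h2r1 (by norm_num) (by norm_num) y z
          rw [hr2] at k1 k2
          have e1 : C.comb (2*r) x z = C.comb (2*r) y z := by
            apply h _ _ z
            rw [k1, k2, heq]
          exact ih (2*r) h2r0 h2r1 h2rle x y z e1
    intro p hp0 hp1 x y z heq
    obtain ⟨n, hn⟩ := exists_pow_lt_of_lt_one hp0 (by norm_num : (1/2 : ℝ) < 1)
    exact ind n p hp0 hp1 hn.le x y z heq
  · intro h x y z heq
    exact h (1/2) (by norm_num) (by norm_num) x y z heq
end

section
/- Let A be an ω-convex space (a set closed under countable convex combinations ∑_n p_n·x_n for distributions p on ℕ, satisfying projection and composition laws). If x, y ∈ A and x is impersonated by y — i.e., there is a sequence a = (a_n) in A with x = ∑_{i∈ℕ} 2^{-i-1}·a_i and a sequence r = (r_n) in A with r_n = a_n +_{1/2} r_{n+1} for all n and y = r_0 — then there exists u ∈ A with x +_{1/2} u = y +_{1/2} u. -/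
open scoped NNReal

/-- An ω-convex (superconvex) space: a set with countable convex combinations
`∑_n p_n·x_n` for distributions `p` on `ℕ`, satisfying the projection and
composition laws.  The operation `comb p x` is only constrained (hence only
meaningful) when `p` is a distribution. -/
structure OmegaConvexSpace (X : Type) where
  comb : (ℕ → ℝ≥0) → (ℕ → X) → X
  proj : ∀ (p : ℕ → ℝ≥0) (m : ℕ), (∀ n, p n = if n = m then 1 else 0) →
    ∀ x : ℕ → X, comb p x = x m
  compose : ∀ (p : ℕ → ℝ≥0) (q : ℕ → ℕ → ℝ≥0) (r : ℕ → ℝ≥0),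
    (∑' n, p n) = 1 → (∀ n, (∑' m, q n m) = 1) →
    (∀ m, r m = ∑' n, p n * q n m) →
    ∀ x : ℕ → X, comb p (fun n => comb (q n) x) = comb r x

/-- The binary combination `x +_{1/2} y`, as a countable combination with
weights `1/2, 1/2, 0, 0, …`. -/
noncomputable def OmegaConvexSpace.half {X : Type} (C : OmegaConvexSpace X)
    (x y : X) : X :=
  C.comb (fun n => if n = 0 then 2⁻¹ else if n = 1 then 2⁻¹ else 0)
    (fun n => if n = 0 then x else y)

/-- The geometric distribution `n ↦ 2^{-n-1}` on `ℕ`. -/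
noncomputable def geomHalf : ℕ → ℝ≥0 := fun n => 2⁻¹ ^ (n + 1)

/-! ### Auxiliary machinery -/

/-- The Dirac distribution at `i`. -/
noncomputable def dirac (i : ℕ) : ℕ → ℝ≥0 := fun n => if n = i then 1 else 0

lemma dirac_tsum (i : ℕ) : ∑' n, dirac i n = 1 := by
  simp [dirac]

lemma dirac_summable (i : ℕ) : Summable (dirac i) :=
  ((hasSum_ite_eq i (1 : ℝ≥0))).summable

lemma comb_dirac {X : Type} (C : OmegaConvexSpace X) (z : ℕ → X) (i : ℕ) :
    C.comb (dirac i) z = z i :=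
  C.proj _ i (fun _ => rfl) z

lemma summable_of_tsum_one {f : ℕ → ℝ≥0} (h : ∑' n, f n = 1) : Summable f := by
  by_contra hs
  rw [tsum_eq_zero_of_not_summable hs] at h
  exact one_ne_zero h.symm

lemma half_add_half : (2 : ℝ≥0)⁻¹ + 2⁻¹ = 1 := by
  rw [← NNReal.coe_inj]
  push_cast
  norm_num

lemma tsum_halfw (g : ℕ → ℝ≥0) :
    ∑' n, (if n = 0 then (2 : ℝ≥0)⁻¹ else if n = 1 then 2⁻¹ else 0) * g n
      = 2⁻¹ * g 0 + 2⁻¹ * g 1 := by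
  rw [tsum_eq_sum (s := ({0, 1} : Finset ℕ))
      (by intro n hn; simp only [Finset.mem_insert, Finset.mem_singleton, not_or] at hn
          simp [hn.1, hn.2])]
  rw [Finset.sum_pair (by norm_num)]
  simp

lemma halfw_tsum :
    ∑' n, (if n = 0 then (2 : ℝ≥0)⁻¹ else if n = 1 then 2⁻¹ else 0) = 1 := by
  have := tsum_halfw (fun _ => 1)
  simpa [half_add_half] using this

/-- Binary combination of two countable combinations over the same sequence. -/
lemma half_comb {X : Type} (C : OmegaConvexSpace X) (z : ℕ → X) (f g : ℕ → ℝ≥0)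
    (hf : ∑' n, f n = 1) (hg : ∑' n, g n = 1) :
    C.half (C.comb f z) (C.comb g z)
      = C.comb (fun m => 2⁻¹ * f m + 2⁻¹ * g m) z := by
  have h1 : (fun n : ℕ => if n = 0 then C.comb f z else C.comb g z)
      = fun n => C.comb (if n = 0 then f else g) z := by
    funext n; split <;> rfl
  rw [OmegaConvexSpace.half, h1]
  refine C.compose _ (fun n => if n = 0 then f else g) _ halfw_tsum
    (fun n => by rcases eq_or_ne n 0 with h | h <;> simp [h, hf, hg]) (fun m => ?_) z
  have := tsum_halfw (fun n => (if n = 0 then f else g) m)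
  simpa using this.symm

lemma tsum_geom : ∑' n : ℕ, (2 : ℝ≥0)⁻¹ ^ (n + 1) = 1 := by
  have hsub : (1 : ℝ≥0) - 2⁻¹ = 2⁻¹ := by
    rw [← NNReal.coe_inj, NNReal.coe_sub (by norm_num)]
    push_cast; norm_num
  have h : ∑' n : ℕ, (2 : ℝ≥0)⁻¹ ^ n = 2 := by
    rw [tsum_geometric_nnreal (by rw [← NNReal.coe_lt_coe]; push_cast; norm_num), hsub]
    rw [← NNReal.coe_inj]; push_cast; norm_num
  calc ∑' n : ℕ, (2 : ℝ≥0)⁻¹ ^ (n + 1) = ∑' n : ℕ, 2⁻¹ * 2⁻¹ ^ n := by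
        refine tsum_congr fun n => ?_
        rw [pow_succ, mul_comm]
    _ = 2⁻¹ * ∑' n : ℕ, (2 : ℝ≥0)⁻¹ ^ n := NNReal.tsum_mul_left _ _
    _ = 1 := by rw [h, ← NNReal.coe_inj]; push_cast; norm_num

lemma geomHalf_tsum : ∑' n, geomHalf n = 1 := by
  simpa [geomHalf] using tsum_geom

lemma tsum_even (c : ℕ → ℝ≥0) :
    ∑' n, (if n % 2 = 0 then c (n / 2) else 0) = ∑' k, c k := by
  have hinj : Function.Injective (fun k : ℕ => 2 * k) := fun a b h => by simp only [] at h; omega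
  have hsupp : Function.support (fun n => if n % 2 = 0 then c (n / 2) else 0)
      ⊆ Set.range (fun k : ℕ => 2 * k) := by
    intro n hn
    simp only [Function.mem_support] at hn
    by_cases h2 : n % 2 = 0
    · exact ⟨n / 2, by show 2 * (n / 2) = n; omega⟩
    · simp [h2] at hn
  have h := hinj.tsum_eq hsupp
  rw [← h]
  refine tsum_congr fun k => ?_
  have h1 : (2 * k) % 2 = 0 := by omega
  have h2 : (2 * k) / 2 = k := by omega
  simp [h1, h2]

lemma tsum_odd3 (c : ℕ → ℝ≥0) :
    ∑' n, (if n % 2 = 1 ∧ 3 ≤ n then c (n / 2) else 0) = ∑' k, c (k + 1) := by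
  have hinj : Function.Injective (fun k : ℕ => 2 * k + 3) := fun a b h => by simp only [] at h; omega
  have hsupp : Function.support (fun n => if n % 2 = 1 ∧ 3 ≤ n then c (n / 2) else 0)
      ⊆ Set.range (fun k : ℕ => 2 * k + 3) := by
    intro n hn
    simp only [Function.mem_support] at hn
    by_cases h2 : n % 2 = 1 ∧ 3 ≤ n
    · exact ⟨(n - 3) / 2, by show 2 * ((n - 3) / 2) + 3 = n; omega⟩
    · simp [h2] at hn
  have h := hinj.tsum_eq hsupp
  rw [← h]
  refine tsum_congr fun k => ?_
  have h1 : (2 * k + 3) % 2 = 1 ∧ 3 ≤ 2 * k + 3 := by omega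
  have h2 : (2 * k + 3) / 2 = k + 1 := by omega
  simp [h1, h2]

/-- Weights putting `2^{-k-1}` on index `2k`. -/
noncomputable def pxw : ℕ → ℝ≥0 :=
  fun n => if n % 2 = 0 then 2⁻¹ ^ (n / 2 + 1) else 0

/-- Weights putting `2^{-k}` on index `2k+1` for `k ≥ 1`. -/
noncomputable def puw : ℕ → ℝ≥0 :=
  fun n => if n % 2 = 1 ∧ 3 ≤ n then 2⁻¹ ^ (n / 2) else 0

noncomputable def wL : ℕ → ℝ≥0 := fun m => 2⁻¹ * pxw m + 2⁻¹ * puw m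

noncomputable def wR : ℕ → ℝ≥0 := fun m => 2⁻¹ * dirac 1 m + 2⁻¹ * puw m

noncomputable def qq : ℕ → ℕ → ℝ≥0 := fun n m =>
  if n % 2 = 0 then dirac n m
  else 2⁻¹ * dirac (n - 1) m + 2⁻¹ * dirac (n + 2) m

lemma pxw_tsum : ∑' n, pxw n = 1 := by
  exact (tsum_even fun k => (2:ℝ≥0)⁻¹ ^ (k + 1)).trans tsum_geom

lemma puw_tsum : ∑' n, puw n = 1 := by
  exact (tsum_odd3 fun k => (2:ℝ≥0)⁻¹ ^ k).trans tsum_geom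

lemma wR_eq (n : ℕ) : wR n = if n % 2 = 1 then 2⁻¹ ^ (n / 2 + 1) else 0 := by
  by_cases h : n % 2 = 1
  · by_cases h1 : n = 1
    · subst h1
      simp [wR, dirac, puw]
    · have h3 : 3 ≤ n := by omega
      have hd : dirac 1 n = 0 := by
        simp only [dirac]; rw [if_neg h1]
      simp only [wR, hd, mul_zero, zero_add, puw, h3, h, and_self, if_true, if_pos]
      rw [pow_succ, mul_comm]
  · have h1 : n ≠ 1 := by omega
    have h2 : ¬ (n % 2 = 1 ∧ 3 ≤ n) := by omega
    have hd : dirac 1 n = 0 := by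
      simp only [dirac]; rw [if_neg h1]
    simp [wR, hd, puw, h2, h]

lemma wR_tsum : ∑' n, wR n = 1 := by
  rw [show (fun n => wR n) = fun n => 2⁻¹ * dirac 1 n + 2⁻¹ * puw n from rfl]
  rw [Summable.tsum_add ((dirac_summable 1).mul_left _)
      ((summable_of_tsum_one puw_tsum).mul_left _),
    NNReal.tsum_mul_left, NNReal.tsum_mul_left, dirac_tsum, puw_tsum]
  simpa using half_add_half

lemma qq_tsum (n : ℕ) : ∑' m, qq n m = 1 := by
  by_cases h : n % 2 = 0
  · simp only [qq, if_pos h]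
    exact dirac_tsum n
  · simp only [qq, if_neg h]
    rw [Summable.tsum_add ((dirac_summable _).mul_left _) ((dirac_summable _).mul_left _),
      NNReal.tsum_mul_left, NNReal.tsum_mul_left, dirac_tsum, dirac_tsum]
    simpa using half_add_half

lemma pxw_eq (m : ℕ) : pxw m = ∑' n, geomHalf n * dirac (2 * n) m := by
  by_cases h : m % 2 = 0
  · rw [tsum_eq_single (m / 2) ?_]
    · have h2 : 2 * (m / 2) = m := by omega
      have hd : dirac (2 * (m / 2)) m = 1 := by simp [dirac, h2]
      rw [hd, mul_one]
      simp only [pxw, geomHalf, if_pos h]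
    · intro n hn
      have : m ≠ 2 * n := by omega
      simp [dirac, this]
  · have h0 : ∀ n : ℕ, geomHalf n * dirac (2 * n) m = 0 := fun n => by
      have : m ≠ 2 * n := by omega
      simp [dirac, this]
    rw [tsum_congr h0, tsum_zero]
    simp [pxw, h]

lemma key (m : ℕ) : wL m = ∑' n, wR n * qq n m := by
  by_cases hm : m % 2 = 0
  · -- support at n = m + 1
    rw [tsum_eq_single (m + 1) ?_]
    · have e1 : ¬ ((m + 1) % 2 = 0) := by omega
      have e1' : (m + 1) % 2 = 1 := by omega
      have e2 : (m + 1) / 2 = m / 2 := by omega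
      have e3 : m + 1 - 1 = m := by omega
      have hd1 : dirac (m + 1 - 1) m = 1 := by simp [dirac, e3]
      have hd2 : dirac (m + 1 + 2) m = 0 := by
        simp only [dirac]; rw [if_neg (by omega)]
      have hpu : puw m = 0 := by simp only [puw]; rw [if_neg (by omega)]
      rw [wR_eq]
      simp only [qq, if_neg e1, if_pos e1', hd1, hd2, mul_one, mul_zero, add_zero,
        wL, hpu, mul_zero, add_zero, pxw, if_pos hm, e2]
      rw [pow_succ, mul_comm]
    · intro n hn
      by_cases h2 : n % 2 = 0
      · rw [wR_eq]
        simp [show ¬ (n % 2 = 1) by omega]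
      · have hd1 : dirac (n - 1) m = 0 := by
          simp only [dirac]; rw [if_neg (by omega)]
        have hd2 : dirac (n + 2) m = 0 := by
          simp only [dirac]; rw [if_neg (by omega)]
        simp [qq, h2, hd1, hd2]
  · by_cases hm1 : m = 1
    · subst hm1
      have h0 : ∀ n : ℕ, wR n * qq n 1 = 0 := by
        intro n
        by_cases h2 : n % 2 = 0
        · rw [wR_eq]; simp [show ¬ (n % 2 = 1) by omega]
        · have hd1 : dirac (n - 1) 1 = 0 := by
            simp only [dirac]; rw [if_neg (by omega)]
          have hd2 : dirac (n + 2) 1 = 0 := by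
            simp only [dirac]; rw [if_neg (by omega)]
          simp [qq, h2, hd1, hd2]
      rw [tsum_congr h0, tsum_zero]
      simp [wL, pxw, puw]
    · -- m odd, m ≥ 3 : support at n = m - 2
      have hm3 : 3 ≤ m := by omega
      rw [tsum_eq_single (m - 2) ?_]
      · have e1 : ¬ ((m - 2) % 2 = 0) := by omega
        have hd1 : dirac (m - 2 - 1) m = 0 := by
          simp only [dirac]; rw [if_neg (by omega)]
        have hd2 : dirac (m - 2 + 2) m = 1 := by
          simp [dirac, show m - 2 + 2 = m by omega]
        have hpx : pxw m = 0 := by simp only [pxw]; rw [if_neg (by omega)]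
        have hpu : puw m = 2⁻¹ ^ (m / 2) := by
          simp [puw, show m % 2 = 1 ∧ 3 ≤ m by omega]
        have e2 : (m - 2) / 2 + 1 = m / 2 := by omega
        rw [wR_eq]
        simp only [qq, if_neg e1, if_pos (show (m - 2) % 2 = 1 by omega), hd1, hd2,
          mul_one, mul_zero, zero_add, wL, hpx, mul_zero, zero_add, hpu, e2]
        rw [mul_comm]
      · intro n hn
        by_cases h2 : n % 2 = 0
        · rw [wR_eq]; simp [show ¬ (n % 2 = 1) by omega]
        · have hd1 : dirac (n - 1) m = 0 := by
            simp only [dirac]; rw [if_neg (by omega)]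
          have hd2 : dirac (n + 2) m = 0 := by
            simp only [dirac]; rw [if_neg (by omega)]
          simp [qq, h2, hd1, hd2]

/-- The interleaving of `a` (even indices) and `r` (odd indices). -/
noncomputable def zz {X : Type} (a r : ℕ → X) : ℕ → X :=
  fun n => if n % 2 = 0 then a (n / 2) else r (n / 2)

lemma zz_even {X : Type} (a r : ℕ → X) (k : ℕ) : zz a r (2 * k) = a k := by
  have h1 : (2 * k) % 2 = 0 := by omega
  have h2 : (2 * k) / 2 = k := by omega
  simp [zz, h1, h2]

lemma zz_odd {X : Type} (a r : ℕ → X) (k : ℕ) : zz a r (2 * k + 1) = r k := by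
  have h1 : ¬ ((2 * k + 1) % 2 = 0) := by omega
  have h2 : (2 * k + 1) / 2 = k := by omega
  simp [zz, h1, h2]

/-- If `x` is impersonated by `y` — `x = ∑_i 2^{-i-1}·a_i` is the head of the
canonical `a`-solution and `y = r 0` is the head of an `a`-solution `r` —
then there is `u` with `x +_{1/2} u = y +_{1/2} u`. -/
theorem stmt_1 {X : Type} (C : OmegaConvexSpace X) (x y : X)
    (a r : ℕ → X)
    (hx : x = C.comb geomHalf a)
    (hr : ∀ n, r n = C.half (a n) (r (n + 1)))
    (hy : y = r 0) :
    ∃ u : X, C.half x u = C.half y u := by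
  refine ⟨C.comb puw (zz a r), ?_⟩
  have hx2 : x = C.comb pxw (zz a r) := by
    rw [hx]
    have ha : a = fun n => C.comb (dirac (2 * n)) (zz a r) := by
      funext n; rw [comb_dirac, zz_even]
    calc C.comb geomHalf a
        = C.comb geomHalf (fun n => C.comb (dirac (2 * n)) (zz a r)) := by rw [← ha]
      _ = C.comb pxw (zz a r) :=
          C.compose _ _ _ geomHalf_tsum (fun n => dirac_tsum _) pxw_eq _
  have hy2 : y = C.comb (dirac 1) (zz a r) := by
    rw [hy, comb_dirac]
    simpa using (zz_odd a r 0).symm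
  have hL : C.half x (C.comb puw (zz a r)) = C.comb wL (zz a r) := by
    rw [hx2]; exact half_comb C _ pxw puw pxw_tsum puw_tsum
  have hR : C.half y (C.comb puw (zz a r)) = C.comb wR (zz a r) := by
    rw [hy2]; exact half_comb C _ (dirac 1) puw (dirac_tsum 1) puw_tsum
  rw [hL, hR]
  have hcomp := C.compose wR qq wL wR_tsum qq_tsum key (zz a r)
  rw [← hcomp]
  congr 1
  funext n
  by_cases h : n % 2 = 0
  · have : qq n = dirac n := by funext m; simp [qq, h]
    rw [this, comb_dirac]
  · have h1 : n % 2 = 1 := by omega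
    have e1 : C.comb (qq n) (zz a r)
        = C.comb (fun m => 2⁻¹ * dirac (n - 1) m + 2⁻¹ * dirac (n + 2) m) (zz a r) := by
      congr 1; funext m; simp [qq, h]
    have e2 := half_comb C (zz a r) (dirac (n - 1)) (dirac (n + 2))
      (dirac_tsum _) (dirac_tsum _)
    rw [e1, ← e2, comb_dirac, comb_dirac]
    have hz1 : zz a r (n - 1) = a (n / 2) := by
      rw [show n - 1 = 2 * (n / 2) by omega, zz_even]
    have hz2 : zz a r (n + 2) = r (n / 2 + 1) := by
      rw [show n + 2 = 2 * (n / 2 + 1) + 1 by omega, zz_odd]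
    have hz3 : zz a r n = r (n / 2) := by simp [zz, h1]
    rw [hz1, hz2, hz3]
    exact (hr (n / 2)).symm
end

section
/- Let (τ_i)_{i∈ℕ} be a sequence of play-measures whose weights sum to some λ ∈ [0,1]. If a play-measure σ is uniformly below ∑_{i∈ℕ} τ_i (i.e., there is d > 0 with σ(s) + d ≤ (∑_i τ_i)(s) for all plays s in the support of σ), then there exists n ∈ ℕ such that σ is uniformly below ∑_{i<n} τ_i. -/
/-!
Every value of a play-measure is bounded by its weight, so when the weights of the `τ i` are
summable the tails `∑_{i ≥ n} τ i` are small uniformly over all plays. Choosing `n` with tails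
below half the margin `d` (taken finite) leaves `σ` a margin `d / 2` below `∑_{i < n} τ i`.
-/

open scoped ENNReal Classical

/-- Active-ending plays over signature `(K, ar)`: alternating sequences of
outputs `k : K` and inputs `i : ar k`. -/
inductive APlay (K : Type) (ar : K → Type) : Type
  | nil : APlay K ar
  | cons (k : K) (i : ar k) (s : APlay K ar) : APlay K ar

variable {K : Type} {ar : K → Type}

/-- Append an output-input pair at the end of an active-ending play. -/
def APlay.snoc : APlay K ar → (k : K) → ar k → APlay K ar
  | .nil, k, i => .cons k i .nil
  | .cons l j s, k, i => .cons l j (s.snoc k i)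

/-- The number of output-input cycles in an active-ending play. -/
def APlay.len : APlay K ar → ℕ
  | .nil => 0
  | .cons _ _ s => s.len + 1

/-- A play-measure: values in `[0,1]` on passive-ending plays (an active play
followed by an output), with `σ_act t = ∑_k σ_pass (t.k)` and
`σ_act (s.k.i) = σ_pass (s.k)`. -/
structure PlayMeasure (K : Type) (ar : K → Type) where
  pass : APlay K ar → K → ℝ≥0∞
  le_one : ∀ t, (∑' k, pass t k) ≤ 1
  consistent : ∀ s k (i : ar k), pass s k = ∑' l, pass (s.snoc k i) l

/-- The value of a play-measure on an active-ending play. -/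
noncomputable def PlayMeasure.act (σ : PlayMeasure K ar) (t : APlay K ar) : ℝ≥0∞ :=
  ∑' k, σ.pass t k

/-- The weight of a play-measure. -/
noncomputable def PlayMeasure.weight (σ : PlayMeasure K ar) : ℝ≥0∞ := σ.act .nil

/-- A partial counterstrategy, given by its set of active-ending plays. -/
structure Counterstrategy (K : Type) (ar : K → Type) where
  act : Set (APlay K ar)
  nil_mem : APlay.nil ∈ act
  prefix_closed : ∀ (s : APlay K ar) (k : K) (i : ar k), s.snoc k i ∈ act → s ∈ act
  deterministic : ∀ (s : APlay K ar) (k : K) (i j : ar k),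
      s.snoc k i ∈ act → s.snoc k j ∈ act → i = j

/-- The passive-ending play `s.k` is a `ρ`-failure: it is in `ρ_pass`
and has no prescribed input. -/
def Counterstrategy.Fails (ρ : Counterstrategy K ar) (s : APlay K ar) (k : K) : Prop :=
  s ∈ ρ.act ∧ ∀ i : ar k, s.snoc k i ∉ ρ.act

/-- `P^m_ρ(σ)`: the sum of `σ_act` over the length-`m` plays in `ρ_act`. -/
noncomputable def contProb (ρ : Counterstrategy K ar) (σ : PlayMeasure K ar) (m : ℕ) : ℝ≥0∞ :=
  ∑' s : {s : APlay K ar // s ∈ ρ.act ∧ s.len = m}, σ.act s.1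

/-- The sum of `σ_pass` over the `ρ`-failures of length `m`. -/
noncomputable def failProb (ρ : Counterstrategy K ar) (σ : PlayMeasure K ar) (m : ℕ) : ℝ≥0∞ :=
  ∑' p : {p : APlay K ar × K // ρ.Fails p.1 p.2 ∧ p.1.len = m}, σ.pass p.1.1 p.1.2

/-- A play-measure is victorious when against every partial counterstrategy,
the probability of play continuing forever is zero. -/
def Victorious (σ : PlayMeasure K ar) : Prop :=
  ∀ ρ : Counterstrategy K ar, (⨅ m, contProb ρ σ m) = 0

/-- The length-`n` prefix of an infinite play. -/
def prefixPlay (f : ℕ → Σ k : K, ar k) : ℕ → APlay K ar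
  | 0 => .nil
  | n + 1 => (prefixPlay f n).snoc (f n).1 (f n).2

/-- A play-measure is well-founded when no infinite play has all its
prefixes in the support. -/
def PlayMeasure.WellFoundedPM (σ : PlayMeasure K ar) : Prop :=
  ¬ ∃ f : ℕ → Σ k : K, ar k, ∀ n, 0 < σ.pass (prefixPlay f n) (f n).1

/-- A play-measure is finitely branching when each active-ending play has
finitely many possible next outputs in the support. -/
def PlayMeasure.FinBranch (σ : PlayMeasure K ar) : Prop :=
  ∀ t : APlay K ar, {k : K | 0 < σ.pass t k}.Finite

/-- Finitely founded: well-founded and finitely branching. -/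
def PlayMeasure.FinFounded (σ : PlayMeasure K ar) : Prop :=
  σ.WellFoundedPM ∧ σ.FinBranch

/-- `f` is uniformly below `g`: there is `d > 0` with `f s + d ≤ g s` on
every passive-ending play `s` in the support of `f`. -/
def UBelow (f g : APlay K ar → K → ℝ≥0∞) : Prop :=
  ∃ d : ℝ≥0∞, 0 < d ∧ ∀ s k, 0 < f s k → f s k + d ≤ g s k

noncomputable def PlayMeasure.shift (σ : PlayMeasure K ar) (k : K) (i : ar k) :
    PlayMeasure K ar where
  pass s l := σ.pass (.cons k i s) l
  le_one t := σ.le_one (.cons k i t)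
  consistent s l j := σ.consistent (.cons k i s) l j

lemma PlayMeasure.shift_weight (σ : PlayMeasure K ar) (k : K) (i : ar k) :
    (σ.shift k i).weight = σ.pass .nil k :=
  (σ.consistent .nil k i).symm

lemma PlayMeasure.pass_le_weight (σ : PlayMeasure K ar) (s : APlay K ar) (k : K) :
    σ.pass s k ≤ σ.weight := by
  induction s generalizing σ with
  | nil => exact ENNReal.le_tsum k
  | cons l j s ih =>
    calc σ.pass (.cons l j s) k = (σ.shift l j).pass s k := rfl
      _ ≤ (σ.shift l j).weight := ih _
      _ = σ.pass .nil l := σ.shift_weight l j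
      _ ≤ σ.weight := ENNReal.le_tsum l

lemma PlayMeasure.exists_tsum_pass_nat_add_le (τ : ℕ → PlayMeasure K ar)
    (hτ : ∑' i, (τ i).weight ≠ ⊤) {ε : ℝ≥0∞} (hε : 0 < ε) :
    ∃ n, ∀ s k, ∑' i, (τ (i + n)).pass s k ≤ ε := by
  obtain ⟨n, hn⟩ :=
    ((ENNReal.tendsto_sum_nat_add (fun i => (τ i).weight) hτ).eventually (gt_mem_nhds hε)).exists
  exact ⟨n, fun s k =>
    (ENNReal.tsum_le_tsum fun i => (τ (i + n)).pass_le_weight s k).trans hn.le⟩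

lemma UBelow.exists_ne_top {f g : APlay K ar → K → ℝ≥0∞} (h : UBelow f g) :
    ∃ d : ℝ≥0∞, 0 < d ∧ d ≠ ⊤ ∧ ∀ s k, 0 < f s k → f s k + d ≤ g s k := by
  obtain ⟨d, hd0, hd⟩ := h
  exact ⟨min d 1, lt_min hd0 one_pos, ((min_le_right d 1).trans_lt ENNReal.one_lt_top).ne,
    fun s k hs => (add_le_add_right (min_le_left d 1) _).trans (hd s k hs)⟩

/-- If the play-measure `σ` is uniformly below the sum of a sequence of
play-measures `(τ i)` of total weight `λ ∈ [0,1]`, then it is uniformly below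
some finite partial sum. -/
theorem stmt_2 {K : Type} {ar : K → Type}
    (τ : ℕ → PlayMeasure K ar) (lam : ℝ≥0∞) (hlam : lam ≤ 1)
    (hw : (∑' i, (τ i).weight) = lam)
    (σ : PlayMeasure K ar)
    (h : UBelow σ.pass (fun s k => ∑' i, (τ i).pass s k)) :
    ∃ n : ℕ, UBelow σ.pass (fun s k => ∑ i ∈ Finset.range n, (τ i).pass s k) := by
  obtain ⟨d, hd0, hdtop, hd⟩ := h.exists_ne_top
  have hfin : ∑' i, (τ i).weight ≠ ⊤ := hw ▸ ne_top_of_le_ne_top ENNReal.one_ne_top hlam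
  obtain ⟨n, hn⟩ := PlayMeasure.exists_tsum_pass_nat_add_le τ hfin (ENNReal.half_pos hd0.ne')
  refine ⟨n, d / 2, ENNReal.half_pos hd0.ne', fun s k hs => ?_⟩
  have hsplit := ENNReal.summable.sum_add_tsum_nat_add' (f := fun i => (τ i).pass s k) (k := n)
  have hhalf : d / 2 ≠ ⊤ := ENNReal.div_ne_top hdtop two_ne_zero
  refine (ENNReal.add_le_add_iff_right hhalf).mp ?_
  calc σ.pass s k + d / 2 + d / 2 = σ.pass s k + d := by rw [add_assoc, ENNReal.add_halves]
    _ ≤ ∑' i, (τ i).pass s k := hd s k hs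
    _ = ∑ i ∈ Finset.range n, (τ i).pass s k + ∑' i, (τ (i + n)).pass s k := hsplit.symm
    _ ≤ ∑ i ∈ Finset.range n, (τ i).pass s k + d / 2 := add_le_add_right (hn s k) _
end

section
/- For any play-measure σ and partial counterstrategy ρ, the infimum P_ρ(σ) of the decreasing sequence P^m_ρ(σ) equals w(σ) − ∑_{s ∈ Fail(ρ)} σ_pass(s). Consequently, σ is victorious (P_ρ(σ) = 0 for every partial counterstrategy ρ) iff for every partial counterstrategy ρ, ∑_{s∈Fail(ρ)} σ_pass(s) = w(σ). -/
open scoped ENNReal Classical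

variable {K : Type} {ar : K → Type}

/-- The total failure probability: the sum of `σ_pass` over all `ρ`-failures. -/
noncomputable def totalFail {K : Type} {ar : K → Type}
    (ρ : Counterstrategy K ar) (σ : PlayMeasure K ar) : ℝ≥0∞ :=
  ∑' p : {p : APlay K ar × K // ρ.Fails p.1 p.2}, σ.pass p.1.1 p.1.2

section Aux

lemma APlay.snoc_len (s : APlay K ar) (k : K) (i : ar k) :
    (s.snoc k i).len = s.len + 1 := by
  induction s with
  | nil => rfl
  | cons l j t ih => simp [APlay.snoc, APlay.len, ih]

lemma APlay.len_eq_zero {s : APlay K ar} (h : s.len = 0) : s = .nil := by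
  cases s with
  | nil => rfl
  | cons k i t => simp [APlay.len] at h

lemma APlay.snoc_surj : ∀ {t : APlay K ar}, t.len ≠ 0 →
    ∃ (s : APlay K ar) (k : K) (i : ar k), t = s.snoc k i := by
  intro t
  induction t with
  | nil => intro h; simp [APlay.len] at h
  | cons k i s ih =>
    intro _
    by_cases hs : s.len = 0
    · rw [APlay.len_eq_zero hs]
      exact ⟨.nil, k, i, rfl⟩
    · obtain ⟨s', l, j, rfl⟩ := ih hs
      exact ⟨.cons k i s', l, j, rfl⟩

lemma APlay.snoc_inj : ∀ {s t : APlay K ar} {k l : K} {i : ar k} {j : ar l},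
    s.snoc k i = t.snoc l j → s = t ∧ k = l := by
  intro s
  induction s with
  | nil =>
    intro t k l i j h
    cases t with
    | nil =>
      simp only [APlay.snoc] at h
      injection h with h1 h2 h3
      exact ⟨rfl, h1⟩
    | cons a b c =>
      simp only [APlay.snoc] at h
      injection h with h1 h2 h3
      exfalso
      have := congrArg APlay.len h3
      simp [APlay.len, APlay.snoc_len] at this
  | cons a b c ih =>
    intro t k l i j h
    cases t with
    | nil =>
      simp only [APlay.snoc] at h
      injection h with h1 h2 h3
      exfalso
      have := congrArg APlay.len h3
      simp [APlay.len, APlay.snoc_len] at this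
    | cons a' b' c' =>
      simp only [APlay.snoc] at h
      injection h with h1 h2 h3
      subst h1
      obtain ⟨hc, hk⟩ := ih h3
      exact ⟨by rw [hc, eq_of_heq h2], hk⟩

variable (ρ : Counterstrategy K ar) (σ : PlayMeasure K ar)

lemma contProb_zero : contProb ρ σ 0 = σ.weight := by
  have h0 : (APlay.nil : APlay K ar) ∈ ρ.act ∧ (APlay.nil : APlay K ar).len = 0 :=
    ⟨ρ.nil_mem, rfl⟩
  rw [contProb, tsum_eq_single (⟨.nil, h0⟩ : {s : APlay K ar // s ∈ ρ.act ∧ s.len = 0})]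
  · rfl
  · intro b hb
    exact absurd (Subtype.ext (APlay.len_eq_zero b.2.2)) hb

lemma contProb_succ (m : ℕ) :
    contProb ρ σ m = failProb ρ σ m + contProb ρ σ (m + 1) := by
  classical
  set T := fun n => {s : APlay K ar // s ∈ ρ.act ∧ s.len = n} with hT
  have hprod : contProb ρ σ m = ∑' p : T m × K, σ.pass p.1.1 p.2 := by
    rw [contProb]
    exact (ENNReal.tsum_prod (f := fun (s : T m) (k : K) => σ.pass s.1 k)).symm
  set S : Set (T m × K) := {p | ρ.Fails p.1.1 p.2} with hS
  have hsplit : (∑' p : S, σ.pass p.1.1.1 p.1.2) + ∑' p : ↥Sᶜ, σ.pass p.1.1.1 p.1.2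
      = ∑' p : T m × K, σ.pass p.1.1 p.2 :=
    Summable.tsum_add_tsum_compl (f := fun p : T m × K => σ.pass p.1.1 p.2) (s := S)
      ENNReal.summable ENNReal.summable
  -- the failing part
  let eF : ↥S ≃ {p : APlay K ar × K // ρ.Fails p.1 p.2 ∧ p.1.len = m} :=
    { toFun := fun q => ⟨(q.1.1.1, q.1.2), q.2, q.1.1.2.2⟩
      invFun := fun r => ⟨(⟨r.1.1, r.2.1.1, r.2.2⟩, r.1.2), r.2.1⟩
      left_inv := by rintro ⟨⟨⟨s, hs⟩, k⟩, hq⟩; rfl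
      right_inv := by rintro ⟨⟨s, k⟩, h⟩; rfl }
  have hfail : (∑' p : S, σ.pass p.1.1.1 p.1.2) = failProb ρ σ m := by
    rw [failProb,
      ← eF.tsum_eq (fun r : {p : APlay K ar × K // ρ.Fails p.1 p.2 ∧ p.1.len = m} =>
        σ.pass r.1.1 r.1.2)]
    exact tsum_congr fun q => rfl
  -- the continuing part
  have hex : ∀ q : ↥Sᶜ, ∃ i : ar q.1.2, q.1.1.1.snoc q.1.2 i ∈ ρ.act := by
    rintro ⟨⟨⟨s, hs, hlen⟩, k⟩, hq⟩
    by_contra hno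
    push_neg at hno
    exact hq ⟨hs, hno⟩
  set F : ↥Sᶜ → T (m + 1) := fun q =>
    ⟨q.1.1.1.snoc q.1.2 (hex q).choose,
      (hex q).choose_spec, by rw [APlay.snoc_len, q.1.1.2.2]⟩ with hF
  have hbij : Function.Bijective F := by
    constructor
    · intro q q' h
      have h1 := Subtype.ext_iff.mp h
      simp only [hF] at h1
      obtain ⟨hsq, hkq⟩ := APlay.snoc_inj h1
      have : q.1 = q'.1 := by
        ext
        · exact hsq
        · exact hkq
      exact Subtype.ext this
    · rintro ⟨t, ht, hlen⟩
      obtain ⟨s, k, i, rfl⟩ := APlay.snoc_surj (by omega : t.len ≠ 0)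
      have hs : s ∈ ρ.act := ρ.prefix_closed s k i ht
      have hslen : s.len = m := by
        rw [APlay.snoc_len] at hlen; omega
      have hnf : (⟨(⟨s, hs, hslen⟩ : T m), k⟩ : T m × K) ∈ Sᶜ := by
        intro hf
        exact hf.2 i ht
      refine ⟨⟨_, hnf⟩, ?_⟩
      apply Subtype.ext
      simp only [hF]
      congr 1
      exact ρ.deterministic s k _ i (hex ⟨_, hnf⟩).choose_spec ht
  have hcont : (∑' p : ↥Sᶜ, σ.pass p.1.1.1 p.1.2) = contProb ρ σ (m + 1) := by
    rw [contProb]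
    rw [← (Equiv.ofBijective F hbij).tsum_eq (fun t : T (m + 1) => σ.act t.1)]
    refine tsum_congr fun q => ?_
    show σ.pass q.1.1.1 q.1.2 = σ.act ((F q).1)
    rw [PlayMeasure.act]
    exact σ.consistent q.1.1.1 q.1.2 (hex q).choose
  rw [hprod, ← hsplit, hfail, hcont]

lemma weight_split (m : ℕ) :
    σ.weight = (∑ j ∈ Finset.range m, failProb ρ σ j) + contProb ρ σ m := by
  induction m with
  | zero => simp [contProb_zero]
  | succ n ih =>
    rw [ih, contProb_succ, Finset.sum_range_succ, add_assoc]

lemma totalFail_eq_tsum : totalFail ρ σ = ∑' m, failProb ρ σ m := by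
  classical
  let e : (Σ m : ℕ, {p : APlay K ar × K // ρ.Fails p.1 p.2 ∧ p.1.len = m}) ≃
      {p : APlay K ar × K // ρ.Fails p.1 p.2} :=
    { toFun := fun q => ⟨q.2.1, q.2.2.1⟩
      invFun := fun q => ⟨q.1.1.len, q.1, q.2, rfl⟩
      left_inv := by
        rintro ⟨m, ⟨p, hf, rfl⟩⟩
        rfl
      right_inv := by rintro ⟨p, hf⟩; rfl }
  rw [totalFail, ← e.tsum_eq (fun q : {p : APlay K ar × K // ρ.Fails p.1 p.2} =>
    σ.pass q.1.1 q.1.2), ENNReal.tsum_sigma']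
  refine tsum_congr fun m => ?_
  rw [failProb]
  exact tsum_congr fun b => rfl

lemma weight_ne_top : σ.weight ≠ ⊤ :=
  ((σ.le_one .nil).trans_lt ENNReal.one_lt_top).ne

lemma totalFail_le_weight : totalFail ρ σ ≤ σ.weight := by
  rw [totalFail_eq_tsum, ENNReal.tsum_eq_iSup_nat]
  refine iSup_le fun m => ?_
  rw [weight_split ρ σ m]
  exact le_self_add

lemma iInf_contProb : (⨅ m, contProb ρ σ m) = σ.weight - totalFail ρ σ := by
  have h1 : ∀ m, contProb ρ σ m = σ.weight - ∑ j ∈ Finset.range m, failProb ρ σ j := by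
    intro m
    refine ENNReal.eq_sub_of_add_eq ?_ ?_
    · refine ne_top_of_le_ne_top (weight_ne_top σ) ?_
      rw [weight_split ρ σ m]; exact le_self_add
    · rw [add_comm]; exact (weight_split ρ σ m).symm
  simp only [h1]
  rw [totalFail_eq_tsum, ENNReal.tsum_eq_iSup_nat, ENNReal.sub_iSup (weight_ne_top σ)]

end Aux

/-- `P_ρ(σ) = w(σ) − ∑_{s∈Fail(ρ)} σ_pass(s)`; consequently `σ` is victorious
iff for every partial counterstrategy `ρ`, `∑_{s∈Fail(ρ)} σ_pass(s) = w(σ)`. -/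
theorem stmt_5 {K : Type} {ar : K → Type} (σ : PlayMeasure K ar) :
    (∀ ρ : Counterstrategy K ar,
        (⨅ m, contProb ρ σ m) = σ.weight - totalFail ρ σ) ∧
      (Victorious σ ↔ ∀ ρ : Counterstrategy K ar, totalFail ρ σ = σ.weight) := by
  refine ⟨fun ρ => iInf_contProb ρ σ, ?_⟩
  constructor
  · intro hv ρ
    have h := hv ρ
    rw [iInf_contProb ρ σ] at h
    exact le_antisymm (totalFail_le_weight ρ σ) (tsub_eq_zero_iff_le.mp h)
  · intro h ρ
    rw [iInf_contProb ρ σ, h ρ, tsub_self]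
end

section
/- Let k ∈ K be an output and (σ_i)_{i∈ar(k)} victorious probabilistic trace strategies. Then the strategy Req k?(σ_i)_{i∈ar(k)} — which assigns 1 to ε and to k, assigns σ_i(s) to k.i.s, and 0 to any play starting with an output l ≠ k — is victorious. -/
open scoped ENNReal Classical

variable {K : Type} {ar : K → Type}

/-! Against a counterstrategy `ρ`, the strategy `τ = Req k?(σ_i)` must open with `k`. If `ρ`
answers no input to `k`, then `τ` has no surviving play of length one. Otherwise `ρ` answers a
unique input `i`, and the surviving plays of length `m + 1` are exactly the plays `k.i.s` with
`s` surviving against `ρ / k.i`, carrying the weight `σ_i(s)`. So the probability of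
continuing forever is bounded by that of `σ_i` against `ρ / k.i`, which is zero. -/

namespace APlay

def append : APlay K ar → APlay K ar → APlay K ar
  | .nil, u => u
  | .cons l j s, u => .cons l j (s.append u)

theorem append_nil (t : APlay K ar) : t.append .nil = t := by
  induction t with
  | nil => rfl
  | cons l j s ih => simp [append, ih]

theorem append_cons (t : APlay K ar) (l : K) (j : ar l) (u : APlay K ar) :
    t.append (.cons l j u) = (t.snoc l j).append u := by
  induction t with
  | nil => rfl
  | cons l' j' s ih => simp [append, snoc, ih]

end APlay

namespace Counterstrategy

variable (ρ : Counterstrategy K ar)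

theorem mem_of_append_mem (u : APlay K ar) :
    ∀ t : APlay K ar, t.append u ∈ ρ.act → t ∈ ρ.act := by
  induction u with
  | nil => intro t h; rwa [APlay.append_nil] at h
  | cons l j u ih =>
    intro t h
    rw [APlay.append_cons] at h
    exact ρ.prefix_closed t l j (ih _ h)

theorem cons_nil_mem_of_cons_mem {k : K} {i : ar k} {s : APlay K ar}
    (h : APlay.cons k i s ∈ ρ.act) : APlay.cons k i .nil ∈ ρ.act :=
  ρ.mem_of_append_mem s (.cons k i .nil) h

/-- The counterstrategy `ρ / k.i`. -/
def residual {k : K} {i : ar k} (hi : APlay.cons k i .nil ∈ ρ.act) : Counterstrategy K ar where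
  act := {s | APlay.cons k i s ∈ ρ.act}
  nil_mem := hi
  prefix_closed s l j h := ρ.prefix_closed (.cons k i s) l j h
  deterministic s l j j' h h' := ρ.deterministic (.cons k i s) l j j' h h'

end Counterstrategy

section FirstMove

variable {ρ : Counterstrategy K ar} {τ : PlayMeasure K ar} {k : K}

theorem contProb_succ_eq_zero (hρ : ∀ i : ar k, APlay.cons k i .nil ∉ ρ.act)
    (hoff : ∀ (k' : K) (j : ar k') (s : APlay K ar), k' ≠ k → τ.act (.cons k' j s) = 0)
    (m : ℕ) : contProb ρ τ (m + 1) = 0 := by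
  refine ENNReal.tsum_eq_zero.2 fun ⟨s, hs, hlen⟩ => ?_
  cases s with
  | nil => simp [APlay.len] at hlen
  | cons k' j s =>
    by_cases hk : k' = k
    · subst hk
      exact absurd (ρ.cons_nil_mem_of_cons_mem hs) (hρ j)
    · exact hoff k' j s hk

theorem contProb_succ_eq_contProb_residual {σ : PlayMeasure K ar} {i : ar k}
    (hi : APlay.cons k i .nil ∈ ρ.act)
    (hcons : ∀ s, τ.act (.cons k i s) = σ.act s)
    (hoff : ∀ (k' : K) (j : ar k') (s : APlay K ar), k' ≠ k → τ.act (.cons k' j s) = 0)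
    (m : ℕ) : contProb ρ τ (m + 1) = contProb (ρ.residual hi) σ m := by
  let g : {s // s ∈ (ρ.residual hi).act ∧ s.len = m} → {s // s ∈ ρ.act ∧ s.len = m + 1} :=
    fun s => ⟨.cons k i s.1, s.2.1, by simp [APlay.len, s.2.2]⟩
  have hg : Function.Injective g := fun s t hst => by
    simpa [g, Subtype.ext_iff] using hst
  have hsupp : Function.support (fun s : {s // s ∈ ρ.act ∧ s.len = m + 1} => τ.act s.1)
      ⊆ Set.range g := by
    rintro ⟨s, hs, hlen⟩ hne
    cases s with
    | nil => simp [APlay.len] at hlen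
    | cons k' j s =>
      by_cases hk : k' = k
      · subst hk
        obtain rfl : j = i := ρ.deterministic .nil k' j i (ρ.cons_nil_mem_of_cons_mem hs) hi
        exact ⟨⟨s, hs, by simpa [APlay.len] using hlen⟩, rfl⟩
      · exact absurd (hoff k' j s hk) hne
  rw [contProb, ← hg.tsum_eq hsupp]
  exact tsum_congr fun s => hcons s.1

end FirstMove

theorem stmt_8_general {K : Type} {ar : K → Type}
    (k : K) (σ : ar k → PlayMeasure K ar)
    (hv : ∀ i, Victorious (σ i))
    (τ : PlayMeasure K ar)
    (h1 : ∀ (i : ar k) (s : APlay K ar) (l : K),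
      τ.pass (.cons k i s) l = (σ i).pass s l)
    (h2 : ∀ (k' : K), k' ≠ k → ∀ (i : ar k') (s : APlay K ar) (l : K),
      τ.pass (.cons k' i s) l = 0) :
    Victorious τ := by
  have hcons : ∀ i s, τ.act (.cons k i s) = (σ i).act s := fun i s => tsum_congr (h1 i s)
  have hoff : ∀ (k' : K) (j : ar k') (s : APlay K ar), k' ≠ k → τ.act (.cons k' j s) = 0 :=
    fun k' j s hk => by simp [PlayMeasure.act, h2 k' hk]
  intro ρ
  refine le_antisymm ?_ zero_le
  by_cases hρ : ∃ i : ar k, APlay.cons k i .nil ∈ ρ.act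
  · obtain ⟨i, hi⟩ := hρ
    calc ⨅ m, contProb ρ τ m ≤ ⨅ m, contProb ρ τ (m + 1) := le_iInf fun m => iInf_le _ _
      _ = ⨅ m, contProb (ρ.residual hi) (σ i) m := by
        simp_rw [contProb_succ_eq_contProb_residual hi (hcons i) hoff]
      _ = 0 := hv i _
  · push Not at hρ
    exact (iInf_le _ 1).trans_eq (contProb_succ_eq_zero hρ hoff 0)

/-- For `k ∈ K` and victorious strategies `(σ_i)_{i ∈ ar k}`, the strategy
`Req k?(σ_i)` is victorious. -/
theorem stmt_8 {K : Type} {ar : K → Type}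
    (k : K) (σ : ar k → PlayMeasure K ar)
    (hw : ∀ i, (σ i).weight = 1) (hv : ∀ i, Victorious (σ i))
    (τ : PlayMeasure K ar)
    (h0 : ∀ l, τ.pass .nil l = if l = k then 1 else 0)
    (h1 : ∀ (i : ar k) (s : APlay K ar) (l : K),
      τ.pass (.cons k i s) l = (σ i).pass s l)
    (h2 : ∀ (k' : K), k' ≠ k → ∀ (i : ar k') (s : APlay K ar) (l : K),
      τ.pass (.cons k' i s) l = 0) :
    Victorious τ :=
  stmt_8_general k σ hv τ h1 h2
end

section
/- Let σ be a play-measure of weight w. Then σ is victorious if and only if for every x < w there exists a victorious play-measure τ ≤ σ (pointwise) of weight at least x. -/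
open scoped ENNReal Classical

variable {K : Type} {ar : K → Type}

/-!
If `τ ≤ σ` pointwise, then against any counterstrategy `ρ` the gap `P^m_ρ(σ) - P^m_ρ(τ)` is
nonincreasing in `m`: the plays of length `m + 1` in `ρ_act` are the continuations of a fixed set
of passive plays of length `m`, and on the discarded ones `σ` loses at least as much mass as `τ`.
At `m = 0` the gap is `w(σ) - w(τ)`, so `inf_m P^m_ρ(σ) ≤ inf_m P^m_ρ(τ) + w(σ) - w(τ)`.
For victorious `τ` the right-hand side is `w(σ) - w(τ)`, which can be made arbitrarily small.
-/

theorem ENNReal.tsum_subtype_add_tsum_le {α : Type*} (E : Set α) {f g : α → ℝ≥0∞}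
    (hgf : g ≤ f) :
    ∑' a : E, f a + ∑' a, g a ≤ ∑' a : E, g a + ∑' a, f a := by
  rw [← ENNReal.summable.tsum_add_tsum_compl (s := E) (f := g) ENNReal.summable,
    ← ENNReal.summable.tsum_add_tsum_compl (s := E) (f := f) ENNReal.summable, add_left_comm,
    ← add_assoc, ← add_assoc, add_comm (∑' a : E, g a)]
  gcongr with a
  exact hgf a

theorem ENNReal.eq_zero_of_forall_lt_add_le {c w : ℝ≥0∞} (hw : w ≠ ∞) (hcw : c ≤ w)
    (h : ∀ x < w, c + x ≤ w) : c = 0 := by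
  have hc : c ≠ ∞ := ne_top_of_le_ne_top hw hcw
  have hsub : w - c = w :=
    le_antisymm tsub_le_self
      (le_of_forall_lt_imp_le_of_dense fun x hx => ENNReal.le_sub_of_add_le_left hc (h x hx))
  rw [← ENNReal.sub_sub_cancel hw hcw, hsub, tsub_self]

namespace APlay

variable {K : Type} {ar : K → Type}

theorem exists_eq_snoc_of_len_eq_succ {s : APlay K ar} {m : ℕ} (hs : s.len = m + 1) :
    ∃ (t : APlay K ar) (k : K) (i : ar k), s = t.snoc k i ∧ t.len = m := by
  induction s generalizing m with
  | nil => simp [len] at hs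
  | cons l j s ih =>
    cases m with
    | zero =>
      cases s with
      | nil => exact ⟨.nil, l, j, rfl, rfl⟩
      | cons => simp [len] at hs
    | succ m =>
      obtain ⟨t, k, i, rfl, ht⟩ := ih (Nat.succ.inj hs)
      exact ⟨.cons l j t, k, i, rfl, by rw [len, ht]⟩

end APlay

namespace Counterstrategy

variable {K : Type} {ar : K → Type}

theorem snoc_eq_snoc_of_mem (ρ : Counterstrategy K ar) {t t' : APlay K ar} {k k' : K}
    {i : ar k} {i' : ar k'} (ht : t = t') (hk : k = k') (hi : t.snoc k i ∈ ρ.act)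
    (hi' : t'.snoc k' i' ∈ ρ.act) : t.snoc k i = t'.snoc k' i' := by
  subst ht hk
  rw [ρ.deterministic t k i i' hi hi']

end Counterstrategy

section ContProb

variable {K : Type} {ar : K → Type} (ρ : Counterstrategy K ar)

theorem contProb_eq_tsum_prod (μ : PlayMeasure K ar) (m : ℕ) :
    contProb ρ μ m =
      ∑' p : {t : APlay K ar // t ∈ ρ.act ∧ t.len = m} × K, μ.pass p.1 p.2 :=
  (ENNReal.tsum_prod (f := fun (t : {t : APlay K ar // t ∈ ρ.act ∧ t.len = m}) k =>
    μ.pass t k)).symm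

theorem contProb_zero_s10 (μ : PlayMeasure K ar) : contProb ρ μ 0 = μ.weight := by
  have h_nil :
      ∀ s : {s : APlay K ar // s ∈ ρ.act ∧ s.len = 0}, s = ⟨.nil, ρ.nil_mem, rfl⟩ := by
    rintro ⟨_ | _, _, hs⟩
    · rfl
    · simp [APlay.len] at hs
  exact tsum_eq_single _ fun s hs => absurd (h_nil s) hs

/-- A play of length `m + 1` in `ρ_act` is `t.k.i` for a pair `(t, k)` of length `m` that
determines `i` (`ρ` is deterministic), and `μ_act (t.k.i) = μ_pass (t.k)`. -/
theorem exists_contProb_succ_eq (m : ℕ) :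
    ∃ E : Set ({t : APlay K ar // t ∈ ρ.act ∧ t.len = m} × K),
      ∀ μ : PlayMeasure K ar, contProb ρ μ (m + 1) = ∑' p : E, μ.pass p.1.1 p.1.2 := by
  choose t k i hs ht using fun s : {s : APlay K ar // s ∈ ρ.act ∧ s.len = m + 1} =>
    APlay.exists_eq_snoc_of_len_eq_succ s.2.2
  have hmem : ∀ s, (t s).snoc (k s) (i s) ∈ ρ.act := fun s => hs s ▸ s.2.1
  let F : {s : APlay K ar // s ∈ ρ.act ∧ s.len = m + 1} →
      {t : APlay K ar // t ∈ ρ.act ∧ t.len = m} × K :=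
    fun s => (⟨t s, ρ.prefix_closed _ _ _ (hmem s), ht s⟩, k s)
  have hF : Function.Injective F := fun s s' h => Subtype.ext <| by
    rw [hs s, hs s']
    exact ρ.snoc_eq_snoc_of_mem (congrArg (·.1.1) h) (congrArg Prod.snd h) (hmem s) (hmem s')
  refine ⟨Set.range F, fun μ => ?_⟩
  rw [← (Equiv.ofInjective F hF).tsum_eq]
  refine tsum_congr fun s => ?_
  rw [PlayMeasure.act, hs s, ← μ.consistent]
  rfl

theorem contProb_succ_le (μ : PlayMeasure K ar) (m : ℕ) :
    contProb ρ μ (m + 1) ≤ contProb ρ μ m := by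
  obtain ⟨E, hE⟩ := exists_contProb_succ_eq ρ m
  rw [hE, contProb_eq_tsum_prod]
  exact ENNReal.tsum_comp_le_tsum_of_injective Subtype.val_injective _

theorem contProb_ne_top (μ : PlayMeasure K ar) (m : ℕ) : contProb ρ μ m ≠ ∞ := by
  refine ne_top_of_le_ne_top ENNReal.one_ne_top ?_
  induction m with
  | zero => exact (contProb_zero_s10 ρ μ).trans_le (μ.le_one .nil)
  | succ m ih => exact (contProb_succ_le ρ μ m).trans ih

variable {σ τ : PlayMeasure K ar}

theorem contProb_succ_add_le (hτσ : ∀ s k, τ.pass s k ≤ σ.pass s k) (m : ℕ) :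
    contProb ρ σ (m + 1) + contProb ρ τ m ≤ contProb ρ τ (m + 1) + contProb ρ σ m := by
  obtain ⟨E, hE⟩ := exists_contProb_succ_eq ρ m
  rw [hE, hE, contProb_eq_tsum_prod, contProb_eq_tsum_prod]
  exact ENNReal.tsum_subtype_add_tsum_le E fun p => hτσ p.1 p.2

theorem contProb_add_weight_le (hτσ : ∀ s k, τ.pass s k ≤ σ.pass s k) (m : ℕ) :
    contProb ρ σ m + τ.weight ≤ contProb ρ τ m + σ.weight := by
  induction m with
  | zero => rw [contProb_zero_s10, contProb_zero_s10, add_comm]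
  | succ m ih =>
    refine (ENNReal.add_le_add_iff_right
      (ENNReal.add_ne_top.2 ⟨contProb_ne_top ρ τ m, contProb_ne_top ρ σ m⟩)).1 ?_
    calc contProb ρ σ (m + 1) + τ.weight + (contProb ρ τ m + contProb ρ σ m)
        = (contProb ρ σ (m + 1) + contProb ρ τ m) + (contProb ρ σ m + τ.weight) := by ring
      _ ≤ (contProb ρ τ (m + 1) + contProb ρ σ m) + (contProb ρ τ m + σ.weight) :=
        add_le_add (contProb_succ_add_le ρ hτσ m) ih
      _ = contProb ρ τ (m + 1) + σ.weight + (contProb ρ τ m + contProb ρ σ m) := by ring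

theorem iInf_contProb_add_weight_le (hτσ : ∀ s k, τ.pass s k ≤ σ.pass s k) :
    (⨅ m, contProb ρ σ m) + τ.weight ≤ (⨅ m, contProb ρ τ m) + σ.weight := by
  rw [ENNReal.iInf_add (f := contProb ρ τ)]
  exact le_iInf fun m => (add_le_add_left (iInf_le _ m) _).trans (contProb_add_weight_le ρ hτσ m)

end ContProb

/-- A play-measure `σ` is victorious iff for every `x < w(σ)` there is a
victorious play-measure `τ ≤ σ` of weight at least `x`. -/
theorem stmt_10 {K : Type} {ar : K → Type} (σ : PlayMeasure K ar) :
    Victorious σ ↔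
      ∀ x < σ.weight, ∃ τ : PlayMeasure K ar,
        (∀ s k, τ.pass s k ≤ σ.pass s k) ∧ x ≤ τ.weight ∧ Victorious τ := by
  refine ⟨fun hσ x hx => ⟨σ, fun _ _ => le_rfl, hx.le, hσ⟩, fun h ρ => ?_⟩
  refine ENNReal.eq_zero_of_forall_lt_add_le (ne_top_of_le_ne_top ENNReal.one_ne_top
    (σ.le_one .nil)) ((iInf_le _ 0).trans_eq (contProb_zero_s10 ρ σ)) fun x hx => ?_
  obtain ⟨τ, hτσ, hxτ, hτ⟩ := h x hx
  calc (⨅ m, contProb ρ σ m) + x ≤ (⨅ m, contProb ρ σ m) + τ.weight := by gcongr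
    _ ≤ (⨅ m, contProb ρ τ m) + σ.weight := iInf_contProb_add_weight_le ρ hτσ
    _ = σ.weight := by rw [hτ ρ, zero_add]
end

section
/- For the signature with an ω-ary operation b and constants (c_n)_{n∈ℕ}, let σ be the trace strategy of the program Req b?(∑_{i≤n} 1/(n+1)·c_i)_{n∈ℕ}; concretely σ(ε)=σ(b)=σ(b.n)=1 and σ(b.n.c_i)=1/(n+1) for i ≤ n, 0 on c_i plays with i>n. Then the only play-measure τ with τ ≺ σ (uniformly below σ) is the zero play-measure. -/
open scoped ENNReal Classical

variable {K : Type} {ar : K → Type}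

/-- The signature with an ω-ary operation `b` (`none`) and constants
`c_n` (`some n`). -/
def K14 : Type := Option ℕ

def ar14 : K14 → Type := fun o => match o with
  | none => ℕ
  | some _ => Empty

/-- For the strategy of the program `Req b?(∑_{i≤n} 1/(n+1)·c_i)_{n∈ℕ}`, the
only play-measure uniformly below it is the zero play-measure. -/
theorem stmt_14 (σ : PlayMeasure K14 ar14)
    (h1 : σ.pass .nil none = 1)
    (h2 : ∀ n : ℕ, σ.pass .nil (some n) = 0)
    (h3 : ∀ n i : ℕ, σ.pass (.cons none (n : ar14 none) .nil) (some i) =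
      if i ≤ n then ((n : ℝ≥0∞) + 1)⁻¹ else 0)
    (h4 : ∀ n : ℕ, σ.pass (.cons none (n : ar14 none) .nil) none = 0)
    (h5 : ∀ (n m : ℕ) (s : APlay K14 ar14) (l : K14),
      σ.pass (.cons none (n : ar14 none) (.cons none (m : ar14 none) s)) l = 0)
    (τ : PlayMeasure K14 ar14) (h : UBelow τ.pass σ.pass) :
    ∀ s k, τ.pass s k = 0 := by
  obtain ⟨d, hd, hle⟩ := h
  have key : ∀ s k, σ.pass s k < d → τ.pass s k = 0 := by
    intro s k hsk
    by_contra hne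
    have hpos : 0 < τ.pass s k := pos_iff_ne_zero.mpr hne
    have h1' := hle s k hpos
    have h2' : d ≤ σ.pass s k := le_trans le_add_self h1'
    exact absurd hsk (not_lt.mpr h2')
  have zero : ∀ s k, σ.pass s k = 0 → τ.pass s k = 0 := fun s k h0 => key s k (h0 ▸ hd)
  obtain ⟨n, hn⟩ := ENNReal.exists_inv_nat_lt hd.ne'
  have hinv : ((n : ℝ≥0∞) + 1)⁻¹ < d := by
    refine lt_of_le_of_lt ?_ hn
    apply ENNReal.inv_le_inv.mpr
    exact le_self_add
  have hlvl1 : ∀ l, τ.pass (.cons none (n : ar14 none) .nil) l = 0 := by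
    intro l
    match l with
    | none => exact zero _ _ (h4 n)
    | some i =>
      apply key
      rw [h3 n i]
      split
      · exact hinv
      · exact hd
  have hnil : τ.pass .nil none = 0 := by
    rw [τ.consistent .nil none (n : ar14 none)]
    have : ∀ l, τ.pass (APlay.nil.snoc none (n : ar14 none)) l = 0 := hlvl1
    simp [this]
  have hlvl1' : ∀ (m : ℕ) (l : K14), τ.pass (.cons none (m : ar14 none) .nil) l = 0 := by
    intro m l
    have hc := τ.consistent .nil none (m : ar14 none)
    rw [hnil] at hc
    exact ENNReal.tsum_eq_zero.mp hc.symm l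
  intro s k
  match s with
  | .nil =>
    match k with
    | none => exact hnil
    | some i => exact zero _ _ (h2 i)
  | .cons none i .nil => exact hlvl1' i k
  | .cons none i (.cons none j s') => exact zero _ _ (h5 i j s' k)
  | .cons (some m) i _ => exact i.elim
  | .cons none i (.cons (some m) j s') => exact j.elim
end

section
/- Let a = (a_n)_{n∈ℕ} be a sequence in an ω-convex space A. Then the canonical a-solution r_n := ∑_{i∈ℕ} 2^{-i-1}·a_{n+i} is indeed an a-solution, i.e., r_n = a_n +_{1/2} r_{n+1} for all n. -/
open scoped NNReal

def shiftDist (p : ℕ → ℝ≥0) : ℕ → ℝ≥0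
  | 0 => 0
  | k + 1 => p k

lemma tsum_shiftDist (p : ℕ → ℝ≥0) : ∑' m, shiftDist p m = ∑' n, p n :=
  (Nat.succ_injective.tsum_eq (f := shiftDist p) fun m hm => by
    cases m with
    | zero => exact absurd rfl hm
    | succ k => exact ⟨k, rfl⟩).symm

noncomputable def halfWeights : ℕ → ℝ≥0 :=
  fun n => if n = 0 then 2⁻¹ else if n = 1 then 2⁻¹ else 0

lemma tsum_halfWeights_mul (f g : ℝ≥0) :
    ∑' n, halfWeights n * (if n = 0 then f else g) = 2⁻¹ * f + 2⁻¹ * g := by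
  rw [tsum_eq_sum (s := {0, 1}) fun n hn => ?_, Finset.sum_pair zero_ne_one]
  · simp [halfWeights]
  · simp only [Finset.mem_insert, Finset.mem_singleton, not_or] at hn
    simp [halfWeights, hn.1, hn.2]

namespace OmegaConvexSpace

variable {X : Type} (C : OmegaConvexSpace X)

lemma comb_dirac (m : ℕ) (x : ℕ → X) : C.comb (fun n => if n = m then 1 else 0) x = x m :=
  C.proj _ m (fun _ => rfl) x

lemma comb_comp_succ {p : ℕ → ℝ≥0} (hp : ∑' n, p n = 1) (x : ℕ → X) :
    C.comb p (fun i => x (i + 1)) = C.comb (shiftDist p) x := by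
  simp_rw [← C.comb_dirac _ x]
  refine C.compose p _ _ hp (fun i => tsum_ite_eq (i + 1) _) (fun m => ?_) x
  cases m <;> simp [shiftDist]

lemma half_comb {p q : ℕ → ℝ≥0} (hp : ∑' n, p n = 1) (hq : ∑' n, q n = 1) (x : ℕ → X) :
    C.half (C.comb p x) (C.comb q x) = C.comb (fun m => 2⁻¹ * p m + 2⁻¹ * q m) x := by
  have hsplit : (fun n => if n = 0 then C.comb p x else C.comb q x) =
      fun n => C.comb (if n = 0 then p else q) x := by
    funext n; split_ifs <;> rfl
  rw [half, hsplit]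
  refine C.compose halfWeights _ _ ?_ (fun n => ?_) (fun m => ?_) x
  · simpa [← two_mul] using tsum_halfWeights_mul 1 1
  · split_ifs <;> assumption
  · rw [← tsum_halfWeights_mul]
    congr 1; funext n; split_ifs <;> rfl

end OmegaConvexSpace

/-- The canonical `a`-solution `r_n = ∑_i 2^{-i-1}·a_{n+i}` is indeed an
`a`-solution: `r_n = a_n +_{1/2} r_{n+1}` for all `n`. -/
theorem stmt_17 {X : Type} (C : OmegaConvexSpace X) (a : ℕ → X) :
    ∀ n : ℕ, C.comb geomHalf (fun i => a (n + i)) =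
      C.half (a n) (C.comb geomHalf (fun i => a (n + 1 + i))) := by
  intro n
  set x : ℕ → X := fun i => a (n + i)
  have head : a n = C.comb (fun m => if m = 0 then 1 else 0) x := (C.comb_dirac 0 x).symm
  have tail : C.comb geomHalf (fun i => a (n + 1 + i)) = C.comb (shiftDist geomHalf) x := by
    rw [← C.comb_comp_succ geomHalf_tsum x]
    congr 1; funext i
    exact congrArg a (Nat.add_right_comm n 1 i)
  rw [head, tail, C.half_comb (tsum_ite_eq 0 _) ((tsum_shiftDist _).trans geomHalf_tsum)]
  congr 1; funext m
  cases m with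
  | zero => simp [geomHalf, shiftDist]
  | succ k =>
    simp only [geomHalf, shiftDist, Nat.succ_ne_zero, if_false, mul_zero, zero_add]
    ring
end
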